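/- arXiv:2111.02198 — 4 statements merged into one kernel-verified Lean document; each statement's English description precedes it below -/
import Mathlib

section
/- For all real q > 1, the infinite product ω(∞,q) = ∏_{i=1}^∞ (1 - q^{-i}) satisfies ω(∞,q) > 1 - q^{-1} - q^{-2} + q^{-5}. -/
/-!
With `x = q⁻¹ ∈ (0, 1)`, keep the first three factors of `∏ (1 - xⁱ)` and bound the tail
by the Weierstrass inequality `∏ (1 - aᵢ) ≥ 1 - ∑ aᵢ`:
`ω(∞, q) ≥ (1 - x)(1 - x²)(1 - x³)(1 - x⁴/(1 - x)) = 1 - x - x² + x⁵ + x⁷ - x⁹`,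
and `x⁷ - x⁹ > 0`.
-/

open Finset

theorem Finset.one_sub_sum_le_prod_one_sub {ι : Type*} (s : Finset ι) {a : ι → ℝ}
    (h0 : ∀ i ∈ s, 0 ≤ a i) (h1 : ∀ i ∈ s, a i ≤ 1) :
    1 - ∑ i ∈ s, a i ≤ ∏ i ∈ s, (1 - a i) := by
  classical
  induction s using Finset.induction_on with
  | empty => simp
  | insert j s hj ih =>
    rw [prod_insert hj, sum_insert hj]
    have hs := ih (fun i hi => h0 i (mem_insert_of_mem hi))
      fun i hi => h1 i (mem_insert_of_mem hi)
    have hS : 0 ≤ ∑ i ∈ s, a i := sum_nonneg fun i hi => h0 i (mem_insert_of_mem hi)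
    have hj0 := h0 j (mem_insert_self j s)
    have hj1 := h1 j (mem_insert_self j s)
    calc 1 - (a j + ∑ i ∈ s, a i) ≤ (1 - a j) * (1 - ∑ i ∈ s, a i) := by
          nlinarith [mul_nonneg hj0 hS]
      _ ≤ (1 - a j) * ∏ i ∈ s, (1 - a i) := mul_le_mul_of_nonneg_left hs (sub_nonneg.2 hj1)

theorem one_sub_le_tprod_one_sub_of_hasSum {ι : Type*} {a : ι → ℝ} {s : ℝ}
    (h0 : ∀ i, 0 ≤ a i) (h1 : ∀ i, a i ≤ 1) (ha : HasSum a s) :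
    1 - s ≤ ∏' i, (1 - a i) := by
  have hmul : Multipliable fun i => 1 - a i := by
    simpa only [sub_eq_add_neg] using Real.multipliable_one_add_of_summable ha.summable.neg
  refine ge_of_tendsto' hmul.hasProd fun t => ?_
  calc 1 - s ≤ 1 - ∑ i ∈ t, a i := by
        linarith [sum_le_hasSum t (fun i _ => h0 i) ha]
    _ ≤ ∏ i ∈ t, (1 - a i) :=
        t.one_sub_sum_le_prod_one_sub (fun i _ => h0 i) fun i _ => h1 i

theorem one_sub_pow_div_le_tprod_one_sub_pow {x : ℝ} (hx0 : 0 ≤ x) (hx1 : x < 1) (k : ℕ) :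
    1 - x ^ k / (1 - x) ≤ ∏' i : ℕ, (1 - x ^ (i + k)) := by
  have hsum : HasSum (fun i : ℕ => x ^ (i + k)) (x ^ k / (1 - x)) := by
    simpa only [pow_add, mul_comm, div_eq_mul_inv] using
      (hasSum_geometric_of_lt_one hx0 hx1).mul_left (x ^ k)
  exact one_sub_le_tprod_one_sub_of_hasSum (fun i => pow_nonneg hx0 _)
    (fun i => pow_le_one₀ hx0 hx1.le) hsum

theorem multipliable_one_sub_pow_add {x : ℝ} (hx0 : 0 ≤ x) (hx1 : x < 1) (k : ℕ) :
    Multipliable fun i : ℕ => 1 - x ^ (i + k) := by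
  have hsum : Summable fun i : ℕ => x ^ (i + k) := by
    simpa only [pow_add] using (summable_geometric_of_lt_one hx0 hx1).mul_right (x ^ k)
  simpa only [sub_eq_add_neg] using Real.multipliable_one_add_of_summable hsum.neg

theorem one_sub_sub_add_lt_tprod_one_sub_pow {x : ℝ} (hx0 : 0 < x) (hx1 : x < 1) :
    1 - x - x ^ 2 + x ^ 5 < ∏' i : ℕ, (1 - x ^ (i + 1)) := by
  have hsplit : ∏' i : ℕ, (1 - x ^ (i + 1))
      = (1 - x) * (1 - x ^ 2) * (1 - x ^ 3) * ∏' i : ℕ, (1 - x ^ (i + 4)) := by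
    have htail := (multipliable_one_sub_pow_add hx0.le hx1 4).prod_mul_tprod_nat_mul'
      (f := fun i : ℕ => 1 - x ^ (i + 1)) (k := 3)
    rw [← htail]
    simp only [prod_range_succ, prod_range_zero, add_assoc]
    norm_num
  have hhead : 0 < (1 - x) * (1 - x ^ 2) * (1 - x ^ 3) := by
    have := pow_lt_one₀ hx0.le hx1 two_ne_zero
    have := pow_lt_one₀ hx0.le hx1 three_ne_zero
    apply mul_pos (mul_pos _ _) _ <;> linarith
  have hx7 : x ^ 9 < x ^ 7 := pow_lt_pow_right_of_lt_one₀ hx0 hx1 (by norm_num)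
  calc 1 - x - x ^ 2 + x ^ 5 < 1 - x - x ^ 2 + x ^ 5 + x ^ 7 - x ^ 9 := by linarith
    _ = (1 - x) * (1 - x ^ 2) * (1 - x ^ 3) * (1 - x ^ 4 / (1 - x)) := by
        field_simp [(sub_pos.2 hx1).ne']
        ring
    _ ≤ ∏' i : ℕ, (1 - x ^ (i + 1)) := by
        rw [hsplit]
        exact mul_le_mul_of_nonneg_left (one_sub_pow_div_le_tprod_one_sub_pow hx0.le hx1 4)
          hhead.le

/-- For all real `q > 1`, the infinite product `ω(∞,q) = ∏_{i=1}^∞ (1 - q^{-i})`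
satisfies `ω(∞,q) > 1 - q⁻¹ - q⁻² + q⁻⁵`. -/
theorem stmt_0 (q : ℝ) (hq : 1 < q) :
    1 - q⁻¹ - (q ^ 2)⁻¹ + (q ^ 5)⁻¹ < ∏' i : ℕ, (1 - (q ^ (i + 1))⁻¹) := by
  simpa only [inv_pow] using one_sub_sub_add_lt_tprod_one_sub_pow
    (inv_pos.2 (zero_lt_one.trans hq)) (inv_lt_one_of_one_lt₀ hq)
end

section
/- Let a, b be integers with 1 ≤ a ≤ b and let q > 1 be real. Then 1 - q^{-a}/log(q) < 1 - (q^{-a} - q^{-b})/log(q) ≤ ω(b,q)/ω(a,q) ≤ 1, where ω(m,q) = ∏_{i=1}^m (1 - q^{-i}). -/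
lemma weier (s : Finset ℕ) (f : ℕ → ℝ) (h0 : ∀ i ∈ s, 0 ≤ f i) (h1 : ∀ i ∈ s, f i ≤ 1) :
    1 - ∑ i ∈ s, f i ≤ ∏ i ∈ s, (1 - f i) := by
  classical
  induction s using Finset.cons_induction with
  | empty => simp
  | cons a s hns ih =>
    rw [Finset.sum_cons, Finset.prod_cons]
    have h0a := h0 a (Finset.mem_cons_self a s)
    have h1a := h1 a (Finset.mem_cons_self a s)
    have h0' : ∀ i ∈ s, 0 ≤ f i := fun i hi => h0 i (Finset.mem_cons_of_mem hi)
    have h1' : ∀ i ∈ s, f i ≤ 1 := fun i hi => h1 i (Finset.mem_cons_of_mem hi)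
    have hS : 0 ≤ ∑ i ∈ s, f i := Finset.sum_nonneg h0'
    have := mul_le_mul_of_nonneg_left (ih h0' h1') (by linarith : (0:ℝ) ≤ 1 - f a)
    nlinarith [this]

/-- For integers `1 ≤ a ≤ b` and real `q > 1`, with `ω(m,q) = ∏_{i=1}^m (1 - q^{-i})`,
`1 - q^{-a}/log q < 1 - (q^{-a} - q^{-b})/log q ≤ ω(b,q)/ω(a,q) ≤ 1`. -/
theorem stmt_6 (q : ℝ) (hq : 1 < q) (a b : ℕ) (ha : 1 ≤ a) (hab : a ≤ b) :
    1 - (q ^ a)⁻¹ / Real.log q < 1 - ((q ^ a)⁻¹ - (q ^ b)⁻¹) / Real.log q ∧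
    1 - ((q ^ a)⁻¹ - (q ^ b)⁻¹) / Real.log q ≤
      (∏ i ∈ Finset.range b, (1 - (q ^ (i + 1))⁻¹)) /
        (∏ i ∈ Finset.range a, (1 - (q ^ (i + 1))⁻¹)) ∧
    (∏ i ∈ Finset.range b, (1 - (q ^ (i + 1))⁻¹)) /
        (∏ i ∈ Finset.range a, (1 - (q ^ (i + 1))⁻¹)) ≤ 1 := by
  have hq0 : (0:ℝ) < q := lt_trans one_pos hq
  have hlog : 0 < Real.log q := Real.log_pos hq
  have hpow : ∀ i : ℕ, 1 < q ^ (i + 1) := fun i => one_lt_pow₀ hq (Nat.succ_ne_zero i)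
  have hfpos : ∀ i : ℕ, 0 < 1 - (q ^ (i + 1))⁻¹ := fun i => by
    have h1 := hpow i
    have : (q ^ (i + 1))⁻¹ < 1 := inv_lt_one_of_one_lt₀ h1
    linarith
  have hfle : ∀ i : ℕ, 1 - (q ^ (i + 1))⁻¹ ≤ 1 := fun i => by
    have : 0 < (q ^ (i + 1))⁻¹ := by positivity
    linarith
  have hPa : 0 < ∏ i ∈ Finset.range a, (1 - (q ^ (i + 1))⁻¹) :=
    Finset.prod_pos fun i _ => hfpos i
  have hsplit : (∏ i ∈ Finset.range a, (1 - (q ^ (i + 1))⁻¹)) *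
      (∏ i ∈ Finset.Ico a b, (1 - (q ^ (i + 1))⁻¹)) =
      ∏ i ∈ Finset.range b, (1 - (q ^ (i + 1))⁻¹) :=
    Finset.prod_range_mul_prod_Ico _ hab
  have hratio : (∏ i ∈ Finset.range b, (1 - (q ^ (i + 1))⁻¹)) /
      (∏ i ∈ Finset.range a, (1 - (q ^ (i + 1))⁻¹)) =
      ∏ i ∈ Finset.Ico a b, (1 - (q ^ (i + 1))⁻¹) := by
    rw [← hsplit, mul_comm, mul_div_assoc, div_self hPa.ne', mul_one]
  have hab' : (q ^ b)⁻¹ ≤ (q ^ a)⁻¹ := by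
    apply inv_anti₀ (by positivity)
    exact pow_le_pow_right₀ hq.le hab
  refine ⟨?_, ?_, ?_⟩
  · have : 0 < (q ^ b)⁻¹ := by positivity
    have h2 : (q ^ a)⁻¹ - (q ^ b)⁻¹ < (q ^ a)⁻¹ := by linarith
    have := div_lt_div_of_pos_right h2 hlog
    linarith
  · -- middle inequality
    rw [hratio]
    have hw := weier (Finset.Ico a b) (fun i => (q ^ (i + 1))⁻¹)
      (fun i _ => by positivity) (fun i _ => (inv_le_one_of_one_le₀ (hpow i).le))
    refine le_trans ?_ hw
    have hsum : ∑ i ∈ Finset.Ico a b, (q ^ (i + 1))⁻¹ =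
        ((q ^ a)⁻¹ - (q ^ b)⁻¹) / (q - 1) := by
      have hx1 : (q : ℝ)⁻¹ ≠ 1 := by
        intro h; have : q = 1 := by field_simp at h; linarith [h]
        linarith
      calc ∑ i ∈ Finset.Ico a b, (q ^ (i + 1))⁻¹
          = ∑ i ∈ Finset.Ico a b, q⁻¹ * (q⁻¹) ^ i := by
            refine Finset.sum_congr rfl fun i _ => ?_
            rw [← inv_pow, pow_succ, mul_comm]
        _ = q⁻¹ * ((q⁻¹ ^ a - q⁻¹ ^ b) / (1 - q⁻¹)) := by
            rw [← Finset.mul_sum, geom_sum_Ico' hx1 hab]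
        _ = ((q ^ a)⁻¹ - (q ^ b)⁻¹) / (q - 1) := by
            rw [inv_pow, inv_pow]
            field_simp
    rw [hsum]
    have hD : 0 ≤ (q ^ a)⁻¹ - (q ^ b)⁻¹ := by linarith
    have hle : Real.log q ≤ q - 1 := Real.log_le_sub_one_of_pos hq0
    have := div_le_div_of_nonneg_left hD hlog hle
    linarith
  · rw [hratio]
    exact Finset.prod_le_one (fun i _ => (hfpos i).le) (fun i _ => hfle i)
end

section
/- Let m, a, b be positive integers with m > a + b, and let q > 1 be real. Then ω(m-a,q)·ω(m-b,q) / (ω(m-a-b,q)·ω(m,q)) > 1 - 1/(q·log(q)), where ω(n,q) = ∏_{i=1}^n (1 - q^{-i}). -/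
lemma weier_aux (g : ℕ → ℝ) (h0 : ∀ i, 0 ≤ g i) (h1 : ∀ i, g i ≤ 1) (n : ℕ) :
    1 - ∑ i ∈ Finset.range n, g i ≤ ∏ i ∈ Finset.range n, (1 - g i) := by
  induction n with
  | zero => simp
  | succ n ih =>
    rw [Finset.sum_range_succ, Finset.prod_range_succ]
    have hp : 0 ≤ ∏ i ∈ Finset.range n, (1 - g i) :=
      Finset.prod_nonneg (fun i _ => by linarith [h1 i])
    have hS : 0 ≤ ∑ i ∈ Finset.range n, g i :=
      Finset.sum_nonneg (fun i _ => h0 i)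
    nlinarith [h0 n, h1 n]

/-- For positive integers `m, a, b` with `m > a + b` and real `q > 1`, with
`ω(n,q) = ∏_{i=1}^n (1 - q^{-i})`,
`ω(m-a,q)·ω(m-b,q) / (ω(m-a-b,q)·ω(m,q)) > 1 - 1/(q·log q)`. -/
theorem stmt_8 (q : ℝ) (hq : 1 < q) (m a b : ℕ) (ha : 1 ≤ a) (hb : 1 ≤ b)
    (hm : a + b < m) :
    1 - 1 / (q * Real.log q) <
      ((∏ i ∈ Finset.range (m - a), (1 - (q ^ (i + 1))⁻¹)) *
        (∏ i ∈ Finset.range (m - b), (1 - (q ^ (i + 1))⁻¹))) /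
      ((∏ i ∈ Finset.range (m - a - b), (1 - (q ^ (i + 1))⁻¹)) *
        (∏ i ∈ Finset.range m, (1 - (q ^ (i + 1))⁻¹))) := by
  have hq0 : 0 < q := by linarith
  have hfpos : ∀ n : ℕ, 0 < 1 - (q ^ (n + 1))⁻¹ := by
    intro n
    have h1 : 1 < q ^ (n + 1) := one_lt_pow₀ hq (Nat.succ_ne_zero n)
    have : (q ^ (n + 1))⁻¹ < 1 := inv_lt_one_of_one_lt₀ h1
    linarith
  have hfle : ∀ n : ℕ, 1 - (q ^ (n + 1))⁻¹ ≤ 1 := by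
    intro n
    have : 0 ≤ (q ^ (n + 1))⁻¹ := inv_nonneg.2 (by positivity)
    linarith
  have hppos : ∀ n : ℕ, 0 < ∏ i ∈ Finset.range n, (1 - (q ^ (i + 1))⁻¹) :=
    fun n => Finset.prod_pos (fun i _ => hfpos i)
  set c := m - a - b with hc
  have hc1 : 1 ≤ c := by omega
  have hma : m - a = c + b := by omega
  have hmb : m = (m - b) + b := by omega
  set A := ∏ i ∈ Finset.range b, (1 - (q ^ (c + i + 1))⁻¹) with hA
  set B := ∏ i ∈ Finset.range b, (1 - (q ^ (m - b + i + 1))⁻¹) with hB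
  have hAeq : ∏ i ∈ Finset.range (m - a), (1 - (q ^ (i + 1))⁻¹) =
      (∏ i ∈ Finset.range c, (1 - (q ^ (i + 1))⁻¹)) * A := by
    rw [hma, Finset.prod_range_add]
  have hBeq : ∏ i ∈ Finset.range m, (1 - (q ^ (i + 1))⁻¹) =
      (∏ i ∈ Finset.range (m - b), (1 - (q ^ (i + 1))⁻¹)) * B := by
    conv_lhs => rw [hmb]
    rw [Finset.prod_range_add]
  have hApos : 0 < A := Finset.prod_pos (fun i _ => hfpos _)
  have hBpos : 0 < B := Finset.prod_pos (fun i _ => hfpos _)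
  have hRL : ((∏ i ∈ Finset.range (m - a), (1 - (q ^ (i + 1))⁻¹)) *
        (∏ i ∈ Finset.range (m - b), (1 - (q ^ (i + 1))⁻¹))) /
      ((∏ i ∈ Finset.range c, (1 - (q ^ (i + 1))⁻¹)) *
        (∏ i ∈ Finset.range m, (1 - (q ^ (i + 1))⁻¹))) = A / B := by
    rw [hAeq, hBeq]
    rw [show (∏ i ∈ Finset.range c, (1 - (q ^ (i + 1))⁻¹)) * A *
        ((∏ i ∈ Finset.range (m - b), (1 - (q ^ (i + 1))⁻¹))) =
        ((∏ i ∈ Finset.range c, (1 - (q ^ (i + 1))⁻¹)) *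
         (∏ i ∈ Finset.range (m - b), (1 - (q ^ (i + 1))⁻¹))) * A by ring,
      show (∏ i ∈ Finset.range c, (1 - (q ^ (i + 1))⁻¹)) *
        ((∏ i ∈ Finset.range (m - b), (1 - (q ^ (i + 1))⁻¹)) * B) =
        ((∏ i ∈ Finset.range c, (1 - (q ^ (i + 1))⁻¹)) *
         (∏ i ∈ Finset.range (m - b), (1 - (q ^ (i + 1))⁻¹))) * B by ring,
      mul_div_mul_left _ _ (mul_pos (hppos c) (hppos (m - b))).ne']
  rw [hRL]
  -- B ≤ 1
  have hB1 : B ≤ 1 := Finset.prod_le_one (fun i _ => (hfpos _).le) (fun i _ => hfle _)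
  have hAB : A ≤ A / B := by
    rw [le_div_iff₀ hBpos]
    nlinarith
  -- lower bound on A
  have hsum : A ≥ 1 - ∑ i ∈ Finset.range b, (q ^ (c + i + 1))⁻¹ := by
    apply weier_aux
    · intro i; positivity
    · intro i
      have := hfpos (c + i); linarith [hfpos (c + i)]
  have hterm : ∀ i : ℕ, (q ^ (c + i + 1))⁻¹ ≤ (q ^ (i + 2))⁻¹ := by
    intro i
    apply inv_anti₀ (by positivity)
    exact pow_le_pow_right₀ (le_of_lt hq) (by omega)
  have hsum2 : ∑ i ∈ Finset.range b, (q ^ (c + i + 1))⁻¹ ≤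
      ∑ i ∈ Finset.range b, (q ^ (i + 2))⁻¹ :=
    Finset.sum_le_sum (fun i _ => hterm i)
  -- geometric sum bound
  have hgeom : ∑ i ∈ Finset.range b, (q ^ (i + 2))⁻¹ < 1 / (q * (q - 1)) := by
    have hr : (q : ℝ)⁻¹ ≠ 1 := by
      intro h
      have : q = 1 := by field_simp at h; linarith
      linarith
    have hrlt : (q⁻¹ : ℝ) < 1 := inv_lt_one_of_one_lt₀ hq
    have h1r : (0:ℝ) < 1 - q⁻¹ := by linarith
    have hrb : (0:ℝ) < (q⁻¹) ^ b := by positivity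
    have hrw : ∀ i : ℕ, (q ^ (i + 2))⁻¹ = (q⁻¹) ^ i * (q ^ 2)⁻¹ := by
      intro i; rw [pow_add, mul_inv, inv_pow]
    rw [Finset.sum_congr rfl fun i _ => hrw i, ← Finset.sum_mul]
    have hs : ∑ i ∈ Finset.range b, (q⁻¹) ^ i < (1 - q⁻¹)⁻¹ := by
      rw [geom_sum_eq hr,
        show ((q⁻¹:ℝ) ^ b - 1) / (q⁻¹ - 1) = (1 - q⁻¹ ^ b) / (1 - q⁻¹) by
          rw [← neg_div_neg_eq]; ring_nf]
      have h1b : (1:ℝ) - q⁻¹ ^ b < 1 := by linarith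
      exact ((div_lt_div_iff_of_pos_right h1r).2 h1b).trans_eq (one_div _)
    have hq2 : (0:ℝ) < (q ^ 2)⁻¹ := by positivity
    have heq : ((1 - q⁻¹)⁻¹ : ℝ) * (q ^ 2)⁻¹ = 1 / (q * (q - 1)) := by
      rw [← mul_inv, one_div]
      congr 1
      field_simp
    calc (∑ i ∈ Finset.range b, (q⁻¹) ^ i) * (q ^ 2)⁻¹
        < (1 - q⁻¹)⁻¹ * (q ^ 2)⁻¹ := by
          exact mul_lt_mul_of_pos_right hs hq2
      _ = 1 / (q * (q - 1)) := heq
  -- log bound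
  have hlog : 0 < Real.log q := Real.log_pos hq
  have hlogle : Real.log q ≤ q - 1 := by
    have := Real.log_le_sub_one_of_pos hq0
    linarith [Real.log_le_sub_one_of_pos hq0]
  have hfinal : 1 / (q * (q - 1)) ≤ 1 / (q * Real.log q) := by
    apply one_div_le_one_div_of_le
    · positivity
    · nlinarith
  calc 1 - 1 / (q * Real.log q) ≤ 1 - 1 / (q * (q - 1)) := by linarith
    _ < 1 - ∑ i ∈ Finset.range b, (q ^ (i + 2))⁻¹ := by linarith
    _ ≤ 1 - ∑ i ∈ Finset.range b, (q ^ (c + i + 1))⁻¹ := by linarith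
    _ ≤ A := hsum
    _ ≤ A / B := hAB
end

section
/- Let V be a finite-dimensional vector space over a field, g an invertible linear map, U_g = im(g-1), F_g = ker(g-1), with V = U_g ⊕ F_g and g acting irreducibly and nontrivially on U_g. If Z is a g-invariant subspace of V on which g acts nontrivially, then U_g ⊆ Z. Consequently U_g is the unique g-invariant subspace on which g acts nontrivially and irreducibly. -/
/-- Let `V` be a finite-dimensional vector space over a field, `g` invertible,
`U_g = im(g-1)`, `F_g = ker(g-1)`, with `V = U_g ⊕ F_g` and `g` acting irreducibly and
nontrivially on `U_g`. If `Z` is a `g`-invariant subspace on which `g` acts nontrivially,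
then `U_g ⊆ Z`. Consequently `U_g` is the unique `g`-invariant subspace on which `g`
acts nontrivially and irreducibly. -/
theorem stmt_12 (F : Type*) [Field F] (V : Type*) [AddCommGroup V] [Module F V]
    [FiniteDimensional F V] (g : V ≃ₗ[F] V)
    (Ug Fg : Submodule F V)
    (hU : Ug = LinearMap.range (g.toLinearMap - LinearMap.id))
    (hF : Fg = LinearMap.ker (g.toLinearMap - LinearMap.id))
    (hcompl : IsCompl Ug Fg)
    (hUne : Ug ≠ ⊥)
    (hirr : ∀ Z : Submodule F V, Z ≤ Ug → (∀ z ∈ Z, g z ∈ Z) → Z = ⊥ ∨ Z = Ug) :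
    (∀ Z : Submodule F V, (∀ z ∈ Z, g z ∈ Z) → (∃ z ∈ Z, g z ≠ z) → Ug ≤ Z) ∧
    (∀ W : Submodule F V, (∀ w ∈ W, g w ∈ W) → (∃ w ∈ W, g w ≠ w) →
      (∀ Z : Submodule F V, Z ≤ W → (∀ z ∈ Z, g z ∈ Z) → Z = ⊥ ∨ Z = W) → W = Ug) := by
  have hUinv : ∀ v ∈ Ug, g v ∈ Ug := by
    intro v hv
    rw [hU] at hv ⊢
    obtain ⟨w, hw⟩ := hv
    refine ⟨g w, ?_⟩
    simp only [LinearMap.sub_apply, LinearMap.id_apply, LinearEquiv.coe_coe] at hw ⊢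
    rw [← hw, map_sub]
  have main : ∀ Z : Submodule F V, (∀ z ∈ Z, g z ∈ Z) → (∃ z ∈ Z, g z ≠ z) → Ug ≤ Z := by
    rintro Z hZinv ⟨z, hz, hgz⟩
    have hint : ∀ v ∈ Z ⊓ Ug, g v ∈ Z ⊓ Ug := fun v hv => ⟨hZinv v hv.1, hUinv v hv.2⟩
    rcases hirr (Z ⊓ Ug) inf_le_right hint with h | h
    · exfalso
      have hmem : g z - z ∈ Z ⊓ Ug := by
        refine ⟨Z.sub_mem (hZinv z hz) hz, ?_⟩
        rw [hU]
        exact ⟨z, by simp⟩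
      rw [h] at hmem
      simp only [Submodule.mem_bot, sub_eq_zero] at hmem
      exact hgz hmem
    · exact le_trans (le_of_eq h.symm) inf_le_left
  refine ⟨main, ?_⟩
  intro W hWinv hWnt hWirr
  have hUW := main W hWinv hWnt
  rcases hWirr Ug hUW hUinv with h | h
  · exact absurd h hUne
  · exact h.symm
end
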